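/- Let G be a (K₂ ∪ 2K₁)-free graph. If S is a cut set of G such that G − S has at least three components, then all components of G − S are trivial (single vertices). -/

import Mathlib

open SimpleGraph

/-- The disjoint union of an edge (on vertices 0,1) and `k` isolated vertices. -/
def K2uK (k : ℕ) : SimpleGraph (Fin (k + 2)) :=
  SimpleGraph.fromRel (fun a b => a = 0 ∧ b = 1)

/-- `G` contains no induced copy of `H`. -/
def HFree {α β : Type*} (H : SimpleGraph α) (G : SimpleGraph β) : Prop :=
  IsEmpty (H ↪g G)

/-- The number of connected components of a graph. -/
noncomputable def numComp {V : Type*} (G : SimpleGraph V) : ℕ :=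
  Nat.card G.ConnectedComponent

/-- `S` is a cut set of `G`: removing `S` leaves at least two components. -/
def IsCutSet {V : Type*} (G : SimpleGraph V) (S : Set V) : Prop :=
  2 ≤ numComp (G.induce (Sᶜ : Set V))

/-! A nontrivial component of `G - S` contains an edge `ab`. Picking a vertex `c` and a vertex `d`
from two further components, none of `ac, ad, bc, bd, cd` is an edge, so `{a, b, c, d}` induces
`K₂ ∪ 2K₁` in `G - S`, hence in `G`. -/

section

variable {V W : Type*}

theorem HFree.of_embedding {U : Type*} {H : SimpleGraph U} {G : SimpleGraph V}
    {G' : SimpleGraph W} (hG : HFree H G) (f : G' ↪g G) : HFree H G' :=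
  ⟨fun e => hG.false (f.comp e)⟩

theorem exists_pair_ne_ne_of_two_lt_natCard {α : Type*} (h : 2 < Nat.card α) (x : α) :
    ∃ y z : α, y ≠ x ∧ z ≠ x ∧ y ≠ z := by
  have : Finite α := Nat.finite_of_card_ne_zero (by omega)
  have := Fintype.ofFinite α
  obtain ⟨a, b, c, hab, hac, hbc⟩ :=
    (Fintype.two_lt_card_iff (α := α)).mp (by rwa [← Nat.card_eq_fintype_card])
  by_cases ha : a = x
  · exact ⟨b, c, ha ▸ hab.symm, ha ▸ hac.symm, hbc⟩
  by_cases hb : b = x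
  · exact ⟨a, c, ha, fun hc => hbc (hb.trans hc.symm), hac⟩
  · exact ⟨a, b, ha, hb, hab⟩

namespace SimpleGraph

theorem ConnectedComponent.exists_adj_of_supp_nontrivial {G : SimpleGraph V}
    {D : G.ConnectedComponent} (hD : D.supp.Nontrivial) :
    ∃ a b, G.Adj a b ∧ G.connectedComponentMk a = D := by
  obtain ⟨u, hu, v, hv, huv⟩ := hD
  obtain ⟨p⟩ := ConnectedComponent.exact (hu.trans hv.symm)
  exact ⟨u, p.snd, p.adj_snd (p.not_nil_of_ne huv), hu⟩

theorem not_hfree_of_adj_of_connectedComponentMk_ne {G : SimpleGraph V} {a b c d : V}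
    (hab : G.Adj a b) (hca : G.connectedComponentMk c ≠ G.connectedComponentMk a)
    (hda : G.connectedComponentMk d ≠ G.connectedComponentMk a)
    (hcd : G.connectedComponentMk c ≠ G.connectedComponentMk d) :
    ¬ HFree (K2uK 2) G := by
  have hcb : G.connectedComponentMk c ≠ G.connectedComponentMk b :=
    ConnectedComponent.connectedComponentMk_eq_of_adj hab ▸ hca
  have hdb : G.connectedComponentMk d ≠ G.connectedComponentMk b :=
    ConnectedComponent.connectedComponentMk_eq_of_adj hab ▸ hda
  have nadj {x y : V} (h : G.connectedComponentMk x ≠ G.connectedComponentMk y) :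
      ¬ G.Adj x y ∧ ¬ G.Adj y x :=
    ⟨fun hxy => h (ConnectedComponent.connectedComponentMk_eq_of_adj hxy),
      fun hyx => h (ConnectedComponent.connectedComponentMk_eq_of_adj hyx).symm⟩
  obtain ⟨nca, nac⟩ := nadj hca
  obtain ⟨nda, nad⟩ := nadj hda
  obtain ⟨ncd, ndc⟩ := nadj hcd
  obtain ⟨ncb, nbc⟩ := nadj hcb
  obtain ⟨ndb, nbd⟩ := nadj hdb
  rintro ⟨f⟩
  refine f ⟨⟨![a, b, c, d], fun i j hij => ?_⟩, fun {i j} => ?_⟩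
  · fin_cases i <;> fin_cases j <;> simp_all
  · change G.Adj (![a, b, c, d] i) (![a, b, c, d] j) ↔ (K2uK 2).Adj i j
    fin_cases i <;> fin_cases j <;> simp [K2uK, hab.symm, *]

theorem ConnectedComponent.supp_subsingleton_of_hfree {G : SimpleGraph V}
    (hG : HFree (K2uK 2) G) (h3 : 3 ≤ numComp G) (D : G.ConnectedComponent) :
    D.supp.Subsingleton := by
  by_contra hD
  obtain ⟨a, b, hab, rfl⟩ := exists_adj_of_supp_nontrivial (Set.not_subsingleton_iff.mp hD)
  obtain ⟨C, C', hC, hC', hCC'⟩ :=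
    exists_pair_ne_ne_of_two_lt_natCard h3 (G.connectedComponentMk a)
  obtain ⟨c, rfl⟩ := C.exists_rep
  obtain ⟨d, rfl⟩ := C'.exists_rep
  exact not_hfree_of_adj_of_connectedComponentMk_ne hab hC hC' hCC' hG

end SimpleGraph

end

theorem stmt_5_general {V : Type*} (G : SimpleGraph V)
    (hfree : HFree (K2uK 2) G) (S : Set V)
    (h3 : 3 ≤ numComp (G.induce (Sᶜ : Set V))) :
    ∀ D : (G.induce (Sᶜ : Set V)).ConnectedComponent, D.supp.Subsingleton :=
  ConnectedComponent.supp_subsingleton_of_hfree (hfree.of_embedding (Embedding.induce _)) h3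

theorem stmt_5 {V : Type*} [Fintype V] (G : SimpleGraph V)
    (hfree : HFree (K2uK 2) G) (S : Set V) (hcut : IsCutSet G S)
    (h3 : 3 ≤ numComp (G.induce (Sᶜ : Set V))) :
    ∀ D : (G.induce (Sᶜ : Set V)).ConnectedComponent, D.supp.Subsingleton :=
  stmt_5_general G hfree S h3
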